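/- arXiv:2304.07096 — 2 statements merged into one kernel-verified Lean document; each statement's English description precedes it below -/
import Mathlib

section
/- The matrix Q is invertible and Q⁻¹ is a positive matrix in the entrywise sense: [Q⁻¹]_{ij} ≥ 0 for all i,j ∈ {0,…,n} (in fact [Q⁻¹]_{ij} = k₀ + min(i,j) > 0). -/
/-!
`Q` is the discrete operator `f ↦ g i - g (i + 1)`, where `g = boundaryDiff k₀ f` is the backward
difference of `f` with the boundary value `g 0 = f 0 / k₀`, and `g (n + 1) = 0`. For the column
`f l = k₀ + min l j` the difference `g` is the indicator of `{0, …, j}`, so `Q f` is the `j`-th unit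
vector: `k₀ + min i j` is the inverse of `Q`, and its entries are at least `k₀ > 0`.
-/

open Matrix

/-- The GMRF random-walk precision matrix `Q` of size `(n+1) × (n+1)`. -/
noncomputable def Qmat (n : ℕ) (k₀ : ℝ) : Matrix (Fin (n+1)) (Fin (n+1)) ℝ :=
  fun i j =>
    if i = j then
      if (i : ℕ) = 0 then 1 + 1 / k₀
      else if (i : ℕ) = n then 1
      else 2
    else if (i : ℕ) + 1 = (j : ℕ) ∨ (j : ℕ) + 1 = (i : ℕ) then -1
    else 0

noncomputable def boundaryDiff (k₀ : ℝ) (f : ℕ → ℝ) : ℕ → ℝ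
  | 0 => f 0 / k₀
  | i + 1 => f (i + 1) - f i

noncomputable def QmatInv (n : ℕ) (k₀ : ℝ) : Matrix (Fin (n+1)) (Fin (n+1)) ℝ :=
  of fun i j => k₀ + min ((i : ℕ) : ℝ) ((j : ℕ) : ℝ)

theorem Qmat_apply_eq {n : ℕ} {k₀ : ℝ} (i l : Fin (n+1)) :
    Qmat n k₀ i l = (if (l : ℕ) = i then Qmat n k₀ i i else 0)
      - (if (l : ℕ) = i + 1 then 1 else 0) - (if (l : ℕ) + 1 = i then 1 else 0) := by
  by_cases h : i = l
  · subst h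
    simp [Qmat]
  · have h' : (l : ℕ) ≠ i := fun e => h (Fin.ext e.symm)
    simp only [Qmat, if_neg h, if_neg h']
    split_ifs <;> first | omega | norm_num

theorem sum_Qmat_mul {n : ℕ} (hn : 1 ≤ n) (k₀ : ℝ) (f : ℕ → ℝ) (i : Fin (n+1)) :
    ∑ l, Qmat n k₀ i l * f l =
      boundaryDiff k₀ f i - if (i : ℕ) < n then boundaryDiff k₀ f (i + 1) else 0 := by
  have hQ := Qmat_apply_eq (k₀ := k₀) i
  generalize hd : Qmat n k₀ i i = d at hQ
  simp only [hQ, sub_mul, ite_mul, one_mul, zero_mul, Finset.sum_sub_distrib]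
  rw [Fin.sum_univ_eq_sum_range (fun l => if l = i then d * f l else 0),
    Fin.sum_univ_eq_sum_range (fun l => if l = i + 1 then f l else 0),
    Fin.sum_univ_eq_sum_range (fun l => if l + 1 = i then f l else 0)]
  obtain ⟨i, hi⟩ := i
  simp only [Qmat, if_true] at hd
  subst hd
  cases i with
  | zero =>
    simp [Finset.sum_ite_eq', boundaryDiff, show 0 < n from hn]
    ring
  | succ m =>
    simp [Finset.sum_ite_eq', boundaryDiff, show m ≤ n by omega]
    split_ifs <;> first | omega | ring

theorem boundaryDiff_add_min {k₀ : ℝ} (hk : k₀ ≠ 0) (j i : ℕ) :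
    boundaryDiff k₀ (fun l => k₀ + min (l : ℝ) j) i = if i ≤ j then 1 else 0 := by
  cases i with
  | zero => simp [boundaryDiff, hk]
  | succ m =>
    simp only [boundaryDiff, ← Nat.cast_min, add_sub_add_left_eq_sub]
    split_ifs with h
    · rw [min_eq_left h, min_eq_left (by omega)]
      push_cast
      ring
    · rw [min_eq_right (by omega), min_eq_right (by omega)]
      ring

theorem Qmat_mul_QmatInv {n : ℕ} (hn : 1 ≤ n) {k₀ : ℝ} (hk : k₀ ≠ 0) :
    Qmat n k₀ * QmatInv n k₀ = 1 := by
  ext i j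
  rw [mul_apply, one_apply]
  simp only [QmatInv, of_apply]
  rw [sum_Qmat_mul hn k₀ (fun l => k₀ + min (l : ℝ) j), boundaryDiff_add_min hk,
    boundaryDiff_add_min hk]
  split_ifs <;> simp_all [Fin.ext_iff] <;> omega

/-- Lemma A.1: `Q` is invertible and `Q⁻¹` is entrywise nonnegative; in fact
`[Q⁻¹]_{ij} = k₀ + min(i,j) > 0`. -/
theorem stmt1 (n : ℕ) (hn : 1 ≤ n) (k₀ : ℝ) (hk : 0 < k₀) :
    IsUnit (Qmat n k₀) ∧
    ∀ i j : Fin (n+1),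
      0 ≤ (Qmat n k₀)⁻¹ i j ∧
      (Qmat n k₀)⁻¹ i j = k₀ + (min (i : ℕ) (j : ℕ) : ℝ) ∧
      0 < (Qmat n k₀)⁻¹ i j := by
  have hmul := Qmat_mul_QmatInv hn hk.ne'
  refine ⟨.of_mul_eq_one _ hmul, fun i j => ?_⟩
  have hentry : (Qmat n k₀)⁻¹ i j = k₀ + (min (i : ℕ) (j : ℕ) : ℝ) := by
    rw [inv_eq_right_inv hmul]
    rfl
  have hpos : 0 < (Qmat n k₀)⁻¹ i j := by
    rw [hentry]
    positivity
  exact ⟨hpos.le, hentry, hpos⟩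
end

section
/- Fix integers n, k ≥ 1, vectors w₁,…,wₙ ∈ ℝᵏ, and real numbers ω₁,…,ωₙ. Define ψ : ℝᵏ → ℝ by ψ(f) = Σ_{t=1}^{n} [ (ω_t − ⟨w_t, f⟩)·expit(⟨w_t, f⟩) + log(1 + exp(⟨w_t, f⟩)) ]. Then ψ is differentiable on ℝᵏ and its gradient is ∇ψ(f) = Σ_{t=1}^{n} (ω_t − ⟨w_t, f⟩) · ( expit(⟨w_t, f⟩) / (1 + exp(⟨w_t, f⟩)) ) · w_t. -/
open Matrix

/-- The inverse logit function `expit(u) = 1/(1 + exp(−u))`. -/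
noncomputable def expit (u : ℝ) : ℝ := 1 / (1 + Real.exp (-u))

/-- The KL objective of Proposition 5:
`ψ(f) = Σ_t [(ω_t − ⟨w_t,f⟩) expit(⟨w_t,f⟩) + log(1 + exp(⟨w_t,f⟩))]`. -/
noncomputable def psiFun (n k : ℕ) (w : Fin n → Fin k → ℝ) (ω : Fin n → ℝ)
    (f : Fin k → ℝ) : ℝ :=
  ∑ t, ((ω t - w t ⬝ᵥ f) * expit (w t ⬝ᵥ f) + Real.log (1 + Real.exp (w t ⬝ᵥ f)))

/-! Each summand of `ψ` is `φ_{ω_t}(⟨w_t, f⟩)` for the scalar function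
`φ_a(x) = (a - x) expit x + log (1 + exp x)`. Since `log (1 + exp x)` has derivative `expit x`,
the two `expit x` terms of `φ_a'` cancel and `φ_a'(x) = (a - x) expit' x`, where
`expit' = expit (1 - expit) = expit / (1 + exp)`. The gradient then follows from the chain rule
through the linear forms `f ↦ ⟨w_t, f⟩`. -/

lemma expit_eq_sigmoid : expit = Real.sigmoid := by
  funext u
  rw [expit, Real.sigmoid_def, one_div]

lemma expit_eq_exp_div (u : ℝ) : expit u = Real.exp u / (1 + Real.exp u) := by
  rw [expit, Real.exp_neg]
  field_simp
  ring

lemma one_sub_expit (u : ℝ) : 1 - expit u = (1 + Real.exp u)⁻¹ := by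
  rw [expit_eq_sigmoid, ← Real.sigmoid_neg, Real.sigmoid_def, neg_neg]

lemma hasDerivAt_expit (u : ℝ) : HasDerivAt expit (expit u / (1 + Real.exp u)) u := by
  rw [div_eq_mul_inv, ← one_sub_expit, expit_eq_sigmoid]
  exact Real.hasDerivAt_sigmoid u

lemma hasDerivAt_log_one_add_exp (u : ℝ) :
    HasDerivAt (fun x => Real.log (1 + Real.exp x)) (expit u) u := by
  rw [expit_eq_exp_div]
  simpa using ((Real.hasDerivAt_exp u).const_add 1).log (by positivity)

lemma hasDerivAt_sub_mul_expit_add_log_one_add_exp (a u : ℝ) :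
    HasDerivAt (fun x => (a - x) * expit x + Real.log (1 + Real.exp x))
      ((a - u) * (expit u / (1 + Real.exp u))) u := by
  have h := (((hasDerivAt_id u).const_sub a).mul (hasDerivAt_expit u)).add
    (hasDerivAt_log_one_add_exp u)
  exact h.congr_deriv (by simp only [id_eq]; ring)

noncomputable def dotProductCLM {ι : Type*} [Fintype ι] (v : ι → ℝ) : (ι → ℝ) →L[ℝ] ℝ :=
  LinearMap.toContinuousLinearMap (dotProductBilin ℝ ℝ v)

@[simp]
lemma dotProductCLM_apply {ι : Type*} [Fintype ι] (v x : ι → ℝ) : dotProductCLM v x = v ⬝ᵥ x :=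
  rfl

lemma HasDerivAt.comp_dotProduct {ι : Type*} [Fintype ι] {φ : ℝ → ℝ} {φ' : ℝ} {v f : ι → ℝ}
    (hφ : HasDerivAt φ φ' (v ⬝ᵥ f)) :
    HasFDerivAt (fun g => φ (v ⬝ᵥ g)) (φ' • dotProductCLM v) f :=
  hφ.comp_hasFDerivAt f (dotProductCLM v).hasFDerivAt

lemma hasFDerivAt_psiFun (n k : ℕ) (w : Fin n → Fin k → ℝ) (ω : Fin n → ℝ) (f : Fin k → ℝ) :
    HasFDerivAt (psiFun n k w ω)
      (∑ t, ((ω t - w t ⬝ᵥ f) * (expit (w t ⬝ᵥ f) / (1 + Real.exp (w t ⬝ᵥ f))))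
        • dotProductCLM (w t)) f :=
  HasFDerivAt.fun_sum fun t _ =>
    (hasDerivAt_sub_mul_expit_add_log_one_add_exp (ω t) (w t ⬝ᵥ f)).comp_dotProduct

theorem stmt13_general (n k : ℕ)
    (w : Fin n → Fin k → ℝ) (ω : Fin n → ℝ) :
    ∀ f : Fin k → ℝ,
      DifferentiableAt ℝ (psiFun n k w ω) f ∧
      ∀ j : Fin k,
        fderiv ℝ (psiFun n k w ω) f (Pi.single j 1)
          = ∑ t, (ω t - w t ⬝ᵥ f) * (expit (w t ⬝ᵥ f) / (1 + Real.exp (w t ⬝ᵥ f))) * w t j := by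
  intro f
  have hψ := hasFDerivAt_psiFun n k w ω f
  refine ⟨hψ.differentiableAt, fun j => ?_⟩
  simp [hψ.fderiv]

/-- Gradient formula of Proposition 5: `ψ` is differentiable with
`∇ψ(f) = Σ_t (ω_t − ⟨w_t,f⟩) (expit(⟨w_t,f⟩)/(1 + exp(⟨w_t,f⟩))) w_t`. -/
theorem stmt13 (n k : ℕ) (hn : 1 ≤ n) (hk : 1 ≤ k)
    (w : Fin n → Fin k → ℝ) (ω : Fin n → ℝ) :
    ∀ f : Fin k → ℝ,
      DifferentiableAt ℝ (psiFun n k w ω) f ∧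
      ∀ j : Fin k,
        fderiv ℝ (psiFun n k w ω) f (Pi.single j 1)
          = ∑ t, (ω t - w t ⬝ᵥ f) * (expit (w t ⬝ᵥ f) / (1 + Real.exp (w t ⬝ᵥ f))) * w t j :=
  stmt13_general n k w ω
end
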